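/- For every integer d ≥ 1 there is a constant k_d > 0 such that for all integers p, n > 0 and all γ, h ∈ Γ_d with d(1,γ) ≤ n and h^p = γ: writing h in its normal form h = t^{m_0} a_1^{m_1} ⋯ a_d^{m_d}, one has p·|m_0| ≤ n and p·|m_i| ≤ k_d · n^i for i = 1, …, d. -/

import Mathlib

namespace ModelFiliform

/-- The "down-shift" endomorphism `N` of `ℤ^d`: `(N x) j = x (j-1)` for `j ≥ 1`, `(N x) 0 = 0`.
The automorphism `φ` of the model filiform group is `1 + N`. -/
def shiftMap (d : ℕ) : (Fin d → ℤ) →ₗ[ℤ] (Fin d → ℤ) where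
  toFun x := fun j =>
    if _h : 1 ≤ (j : ℕ) then x ⟨(j : ℕ) - 1, lt_of_le_of_lt (Nat.sub_le _ _) j.isLt⟩ else 0
  map_add' x y := by funext j; by_cases h : 1 ≤ (j : ℕ) <;> simp [h]
  map_smul' c x := by funext j; by_cases h : 1 ≤ (j : ℕ) <;> simp [h]

theorem shiftMap_apply (d : ℕ) (x : Fin d → ℤ) (j : Fin d) :
    shiftMap d x j =
      if _h : 1 ≤ (j : ℕ) then x ⟨(j : ℕ) - 1, lt_of_le_of_lt (Nat.sub_le _ _) j.isLt⟩ else 0 :=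
  rfl

theorem shiftMap_pow_apply (d k : ℕ) (x : Fin d → ℤ) (j : Fin d) :
    ((shiftMap d ^ k) x) j =
      if _h : k ≤ (j : ℕ) then x ⟨(j : ℕ) - k, lt_of_le_of_lt (Nat.sub_le _ _) j.isLt⟩
      else 0 := by
  induction k generalizing x with
  | zero => simp
  | succ k ih =>
      rw [pow_succ, Module.End.mul_apply, ih]
      by_cases h1 : k ≤ (j : ℕ)
      · rw [dif_pos h1, shiftMap_apply]
        by_cases h2 : k + 1 ≤ (j : ℕ)
        · rw [dif_pos (show 1 ≤ (j : ℕ) - k by omega), dif_pos h2]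
          have hab : (j : ℕ) - k - 1 = (j : ℕ) - (k + 1) := by omega
          simp only [hab]
        · rw [dif_neg (show ¬ 1 ≤ (j : ℕ) - k by omega), dif_neg h2]
      · rw [dif_neg h1, dif_neg (by omega)]

theorem shiftMap_nilpotent (d : ℕ) : IsNilpotent (shiftMap d) := by
  refine ⟨d, ?_⟩
  apply LinearMap.ext
  intro x
  funext j
  rw [shiftMap_pow_apply, dif_neg (by omega)]
  rfl

/-- `φ = 1 + N` as a unit of the endomorphism ring of `ℤ^d`. -/
noncomputable def phiUnit (d : ℕ) : (Module.End ℤ (Fin d → ℤ))ˣ :=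
  ((shiftMap_nilpotent d).isUnit_one_add).unit

/-- The automorphism `φ` of `ℤ^d`: writing `ℤ^d` multiplicatively with basis `a_1, …, a_d`
(where `a_{i+1}` is the `i`-th standard basis vector, `i : Fin d`), it fixes `a_d` and sends
`a_i ↦ a_i a_{i+1}` for `1 ≤ i < d`. -/
noncomputable def phi (d : ℕ) : (Fin d → ℤ) ≃ₗ[ℤ] (Fin d → ℤ) :=
  LinearMap.GeneralLinearGroup.generalLinearEquiv ℤ _ (phiUnit d)

/-- `φ` as a multiplicative automorphism of `Multiplicative ℤ^d`. -/
noncomputable def phiAut (d : ℕ) : MulAut (Multiplicative (Fin d → ℤ)) :=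
  AddEquiv.toMultiplicative (phi d).toAddEquiv

/-- The action of `ℤ` on `ℤ^d` defining `Γ_d = ℤ^d ⋊_φ ℤ`: the generator `t` acts by
`t x t⁻¹ = φ⁻¹(x)`, so that `t⁻¹ a_i t = φ(a_i)`, i.e. `t⁻¹ a_i t = a_i a_{i+1}` for
`1 ≤ i < d` and `t⁻¹ a_d t = a_d`. -/
noncomputable def act (d : ℕ) : Multiplicative ℤ →* MulAut (Multiplicative (Fin d → ℤ)) :=
  zpowersHom _ (phiAut d)⁻¹

/-- The discrete model filiform group `Γ_d = ℤ^d ⋊_φ ℤ`. -/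
abbrev Gamma (d : ℕ) : Type :=
  SemidirectProduct (Multiplicative (Fin d → ℤ)) (Multiplicative ℤ) (act d)

/-- The generator `t` of `Γ_d`. -/
noncomputable def tGen (d : ℕ) : Gamma d :=
  SemidirectProduct.inr (Multiplicative.ofAdd (1 : ℤ))

/-- The generators `a_1, …, a_d` of `Γ_d`: here `aGen d i` is `a_{i+1}` (as `i : Fin d` is
0-indexed), so `a_1 = aGen d ⟨0, _⟩` and `a_d = aGen d ⟨d-1, _⟩`. -/
noncomputable def aGen (d : ℕ) (i : Fin d) : Gamma d :=
  SemidirectProduct.inl (Multiplicative.ofAdd (Pi.single i (1 : ℤ)))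

/-- The standard generating set `{a_1, …, a_d, t}` of `Γ_d`. -/
noncomputable def gens (d : ℕ) : Set (Gamma d) := insert (tGen d) (Set.range (aGen d))

/-- The word length `d(1,g)` of `g ∈ Γ_d` with respect to the standard generators: the least
`n` such that `g` is a product of `n` elements of `{a_1^{±1}, …, a_d^{±1}, t^{±1}}`. -/
noncomputable def wl (d : ℕ) (g : Gamma d) : ℕ :=
  sInf {n | ∃ l : List (Gamma d), l.length = n ∧
    (∀ x ∈ l, x ∈ gens d ∨ x⁻¹ ∈ gens d) ∧ l.prod = g}

/-- The subgroup `A_d = ℤ^d ⋊ 1 = ⟨a_1, …, a_d⟩` of `Γ_d`. -/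
noncomputable def A (d : ℕ) : Subgroup (Gamma d) := Subgroup.closure (Set.range (aGen d))

theorem phi_apply (d : ℕ) (x : Fin d → ℤ) : phi d x = x + shiftMap d x := by
  show ((phiUnit d : Module.End ℤ (Fin d → ℤ))) x = x + shiftMap d x
  rw [show ((phiUnit d : Module.End ℤ (Fin d → ℤ))) = 1 + shiftMap d from
    (shiftMap_nilpotent d).isUnit_one_add.unit_spec]
  simp

theorem phi_coord_zero (d : ℕ) (x : Fin d → ℤ) (j : Fin d) (hj : (j : ℕ) = 0) :
    phi d x j = x j := by
  rw [phi_apply]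
  simp [shiftMap_apply, hj]

theorem phi_coord (d : ℕ) (x : Fin d → ℤ) (j j' : Fin d) (hj : (j' : ℕ) + 1 = (j : ℕ)) :
    phi d x j = x j + x j' := by
  rw [phi_apply]
  have h1 : 1 ≤ (j : ℕ) := by omega
  simp only [Pi.add_apply, shiftMap_apply, dif_pos h1]
  have he : (⟨(j : ℕ) - 1, lt_of_le_of_lt (Nat.sub_le _ _) j.isLt⟩ : Fin d) = j' :=
    Fin.ext (show (j : ℕ) - 1 = (j' : ℕ) by omega)
  rw [he]

theorem symm_coord_zero (d : ℕ) (x : Fin d → ℤ) (j : Fin d) (hj : (j : ℕ) = 0) :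
    (phi d).symm x j = x j := by
  conv_rhs => rw [← (phi d).apply_symm_apply x, phi_coord_zero d _ j hj]

theorem symm_coord (d : ℕ) (x : Fin d → ℤ) (j j' : Fin d) (hj : (j' : ℕ) + 1 = (j : ℕ)) :
    (phi d).symm x j = x j - (phi d).symm x j' := by
  have h := phi_coord d ((phi d).symm x) j j' hj
  rw [LinearEquiv.apply_symm_apply] at h
  omega

/-- `psi d s = φ^{-s}` -/
noncomputable def psi (d : ℕ) (s : ℤ) : (Fin d → ℤ) ≃ₗ[ℤ] (Fin d → ℤ) := (phi d)⁻¹ ^ s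

theorem psi_zero (d : ℕ) (x : Fin d → ℤ) : psi d 0 x = x := by simp [psi]

theorem psi_add (d : ℕ) (a b : ℤ) (x : Fin d → ℤ) : psi d (a + b) x = psi d a (psi d b x) := by
  rw [psi, psi, psi, zpow_add]
  rfl

theorem psi_succ (d : ℕ) (s : ℤ) (x : Fin d → ℤ) :
    psi d (s + 1) x = (phi d).symm (psi d s x) := by
  rw [add_comm, psi_add]
  rfl

theorem psi_pred (d : ℕ) (s : ℤ) (x : Fin d → ℤ) :
    psi d (s - 1) x = phi d (psi d s x) := by
  have : psi d s x = (phi d).symm (psi d (s - 1) x) := by rw [← psi_succ]; norm_num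
  rw [this, LinearEquiv.apply_symm_apply]

theorem pow_step (n l : ℕ) (hn : 1 ≤ n) : n ^ (l + 1) + n ^ l ≤ (n + 1) ^ (l + 1) := by
  have h1 : (n + 1) ^ (l + 1) = (n + 1) ^ l * n + (n + 1) ^ l := by ring
  have h2 : n ^ l ≤ (n + 1) ^ l := Nat.pow_le_pow_left (by omega) l
  calc n ^ (l + 1) + n ^ l ≤ n ^ l * n + (n + 1) ^ l := by
        rw [pow_succ]; omega
    _ ≤ (n + 1) ^ l * n + (n + 1) ^ l := by
        have := Nat.mul_le_mul_right n h2; omega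
    _ = (n + 1) ^ (l + 1) := h1.symm

theorem pow_step' (n l : ℕ) (hn : 1 ≤ n) : n ^ (l + 1) + (n + 1) ^ l ≤ (n + 1) ^ (l + 1) := by
  have h2 : n ^ l ≤ (n + 1) ^ l := Nat.pow_le_pow_left (by omega) l
  have : n ^ (l + 1) ≤ (n + 1) ^ l * n := by
    rw [pow_succ]; exact Nat.mul_le_mul_right n h2
  have h1 : (n + 1) ^ (l + 1) = (n + 1) ^ l * n + (n + 1) ^ l := by ring
  omega

theorem phi_bound (d : ℕ) {c n : ℕ} (hn : 1 ≤ n) {x : Fin d → ℤ}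
    (hx : ∀ j : Fin d, (x j).natAbs ≤ c * n ^ (j : ℕ)) (j : Fin d) :
    ((phi d x) j).natAbs ≤ c * (n + 1) ^ (j : ℕ) := by
  rcases hs : (j : ℕ) with _ | l
  · rw [phi_coord_zero d x j hs]
    have h1 := hx j; rw [hs] at h1; simpa using h1
  · have hl : l < d := by have := j.isLt; omega
    have hcoord := phi_coord d x j ⟨l, hl⟩ (by simp [hs])
    rw [hcoord]
    have h1 := hx j; rw [hs] at h1
    have h2 := hx ⟨l, hl⟩
    simp only [Fin.val_mk] at h2
    calc (x j + x ⟨l, hl⟩).natAbs ≤ (x j).natAbs + (x ⟨l, hl⟩).natAbs :=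
          Int.natAbs_add_le _ _
      _ ≤ c * n ^ (l + 1) + c * n ^ l := by omega
      _ = c * (n ^ (l + 1) + n ^ l) := by ring
      _ ≤ c * (n + 1) ^ (l + 1) := Nat.mul_le_mul_left c (pow_step n l hn)

theorem symm_bound (d : ℕ) {c n : ℕ} (hn : 1 ≤ n) {x : Fin d → ℤ}
    (hx : ∀ j : Fin d, (x j).natAbs ≤ c * n ^ (j : ℕ)) (j : Fin d) :
    (((phi d).symm x) j).natAbs ≤ c * (n + 1) ^ (j : ℕ) := by
  suffices H : ∀ l : ℕ, ∀ j : Fin d, (j : ℕ) = l →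
      (((phi d).symm x) j).natAbs ≤ c * (n + 1) ^ l by
    exact (H (j : ℕ) j rfl).trans (le_of_eq rfl)
  intro l
  induction l with
  | zero =>
      intro j hj
      rw [symm_coord_zero d x j hj]
      simpa using (hx j).trans (by rw [hj]; simp)
  | succ l ih =>
      intro j hj
      have hl : l < d := by have := j.isLt; omega
      set j' : Fin d := ⟨l, hl⟩
      rw [symm_coord d x j j' (by simp [j']; omega)]
      calc (x j - (phi d).symm x j').natAbs
          ≤ (x j).natAbs + ((phi d).symm x j').natAbs := Int.natAbs_sub_le _ _
        _ ≤ c * n ^ (l + 1) + c * (n + 1) ^ l := by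
            have h1 := hx j; rw [hj] at h1
            have h2 := ih j' rfl
            omega
        _ = c * (n ^ (l + 1) + (n + 1) ^ l) := by ring
        _ ≤ c * (n + 1) ^ (l + 1) := Nat.mul_le_mul_left c (pow_step' n l hn)

theorem psi_bound (d : ℕ) {c n : ℕ} (hn : 1 ≤ n) {x : Fin d → ℤ}
    (hx : ∀ j : Fin d, (x j).natAbs ≤ c * n ^ (j : ℕ)) (s : ℤ) (j : Fin d) :
    ((psi d s x) j).natAbs ≤ c * (n + s.natAbs) ^ (j : ℕ) := by
  induction s using Int.induction_on generalizing j with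
  | zero => rw [psi_zero]; simpa using hx j
  | succ k ih =>
      rw [psi_succ]
      have h0 := symm_bound d (c := c) (n := n + (k : ℤ).natAbs) (by omega) ih j
      have he : n + ((k : ℤ) + 1).natAbs = n + (k : ℤ).natAbs + 1 := by omega
      rw [he]
      exact h0
  | pred k ih =>
      rw [show (-(k : ℤ) - 1) = (-(k : ℤ)) - 1 by ring, psi_pred]
      have h0 := phi_bound d (c := c) (n := n + (-(k : ℤ)).natAbs) (by omega) ih j
      have he : n + (-(k : ℤ) - 1).natAbs = n + (-(k : ℤ)).natAbs + 1 := by omega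
      rw [he]
      exact h0

theorem psi_bound' (d : ℕ) {c n kk : ℕ} (hn : 1 ≤ n) {x : Fin d → ℤ}
    (hx : ∀ j : Fin d, (x j).natAbs ≤ c * n ^ (j : ℕ)) {s : ℤ} (hs : s.natAbs ≤ kk) (j : Fin d) :
    ((psi d s x) j).natAbs ≤ c * (n + kk) ^ (j : ℕ) :=
  (psi_bound d hn hx s j).trans
    (Nat.mul_le_mul_left c (Nat.pow_le_pow_left (by omega) _))

theorem phi_tri (d : ℕ) (J : ℕ) {x : Fin d → ℤ} (hx : ∀ i : Fin d, (i : ℕ) < J → x i = 0) :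
    (∀ i : Fin d, (i : ℕ) < J → phi d x i = 0) ∧
      ∀ j : Fin d, (j : ℕ) = J → phi d x j = x j := by
  constructor
  · intro i hi
    rcases hs : (i : ℕ) with _ | l
    · rw [phi_coord_zero d x i hs]; exact hx i hi
    · have hl : l < d := lt_trans (by omega) i.isLt
      rw [phi_coord d x i ⟨l, hl⟩ (by simp [hs]), hx i hi, hx ⟨l, hl⟩ (show l < J by omega)]
      simp
  · intro j hj
    rcases hs : (j : ℕ) with _ | l
    · exact phi_coord_zero d x j hs
    · have hl : l < d := lt_trans (by omega) j.isLt
      rw [phi_coord d x j ⟨l, hl⟩ (by simp [hs]), hx ⟨l, hl⟩ (show l < J by omega)]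
      simp

theorem symm_tri (d : ℕ) (J : ℕ) {x : Fin d → ℤ} (hx : ∀ i : Fin d, (i : ℕ) < J → x i = 0) :
    (∀ i : Fin d, (i : ℕ) < J → (phi d).symm x i = 0) ∧
      ∀ j : Fin d, (j : ℕ) = J → (phi d).symm x j = x j := by
  have key : ∀ l : ℕ, ∀ i : Fin d, (i : ℕ) = l → (i : ℕ) < J → (phi d).symm x i = 0 := by
    intro l
    induction l with
    | zero => intro i h0 hi; rw [symm_coord_zero d x i h0]; exact hx i hi
    | succ l ih =>
        intro i hs hi
        have hl : l < d := lt_trans (by omega) i.isLt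
        rw [symm_coord d x i ⟨l, hl⟩ (by simp [hs]), hx i hi,
          ih ⟨l, hl⟩ rfl (show l < J by omega)]
        simp
  refine ⟨fun i hi => key (i : ℕ) i rfl hi, ?_⟩
  intro j hj
  rcases hs : (j : ℕ) with _ | l
  · exact symm_coord_zero d x j hs
  · have hl : l < d := lt_trans (by omega) j.isLt
    rw [symm_coord d x j ⟨l, hl⟩ (by simp [hs]), key l ⟨l, hl⟩ rfl (show l < J by omega)]
    simp

theorem psi_tri (d : ℕ) (s : ℤ) (J : ℕ) {x : Fin d → ℤ}
    (hx : ∀ i : Fin d, (i : ℕ) < J → x i = 0) :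
    (∀ i : Fin d, (i : ℕ) < J → psi d s x i = 0) ∧
      ∀ j : Fin d, (j : ℕ) = J → psi d s x j = x j := by
  induction s using Int.induction_on with
  | zero =>
      refine ⟨fun i hi => ?_, fun j hj => ?_⟩
      · rw [psi_zero]; exact hx i hi
      · rw [psi_zero]
  | succ k ih =>
      simp only [psi_succ]
      obtain ⟨ih1, ih2⟩ := ih
      obtain ⟨s1, s2⟩ := symm_tri d J ih1
      exact ⟨s1, fun j hj => (s2 j hj).trans (ih2 j hj)⟩
  | pred k ih =>
      simp only [psi_pred]
      obtain ⟨ih1, ih2⟩ := ih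
      obtain ⟨s1, s2⟩ := phi_tri d J ih1
      exact ⟨s1, fun j hj => (s2 j hj).trans (ih2 j hj)⟩

/-- The group hom from linear automorphisms to multiplicative automorphisms. -/
noncomputable def F (d : ℕ) :
    ((Fin d → ℤ) ≃ₗ[ℤ] (Fin d → ℤ)) →* MulAut (Multiplicative (Fin d → ℤ)) where
  toFun e := AddEquiv.toMultiplicative e.toAddEquiv
  map_one' := by ext x; rfl
  map_mul' e f := by ext x; rfl

theorem F_apply (d : ℕ) (e : (Fin d → ℤ) ≃ₗ[ℤ] (Fin d → ℤ)) (x : Fin d → ℤ) :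
    F d e (Multiplicative.ofAdd x) = Multiplicative.ofAdd (e x) := rfl

theorem phiAut_eq (d : ℕ) : phiAut d = F d (phi d) := rfl

theorem act_eq (d : ℕ) (r : ℤ) : act d (Multiplicative.ofAdd r) = F d (psi d r) := by
  show zpowersHom _ (phiAut d)⁻¹ (Multiplicative.ofAdd r) = _
  rw [zpowersHom_apply, toAdd_ofAdd, phiAut_eq, ← map_inv, ← map_zpow]
  rfl

/-- Abelian component of an element of `Γ_d`. -/
def Lc {d : ℕ} (g : Gamma d) : Fin d → ℤ := Multiplicative.toAdd g.left

/-- `t`-component of an element of `Γ_d`. -/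
def Rc {d : ℕ} (g : Gamma d) : ℤ := Multiplicative.toAdd g.right

theorem Rc_mul {d : ℕ} (g h : Gamma d) : Rc (g * h) = Rc g + Rc h := rfl

theorem Lc_mul {d : ℕ} (g h : Gamma d) : Lc (g * h) = Lc g + psi d (Rc g) (Lc h) := by
  show Multiplicative.toAdd (g.left * act d g.right h.left) = _
  rw [toAdd_mul]
  congr 1
  rw [show g.right = Multiplicative.ofAdd (Rc g) from rfl, act_eq,
    show h.left = Multiplicative.ofAdd (Lc h) from rfl, F_apply]
  rfl

theorem Lc_one (d : ℕ) : Lc (1 : Gamma d) = 0 := rfl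

theorem Rc_one (d : ℕ) : Rc (1 : Gamma d) = 0 := rfl

theorem Rc_tGen (d : ℕ) : Rc (tGen d) = 1 := rfl

theorem Lc_tGen (d : ℕ) : Lc (tGen d) = 0 := rfl

theorem Rc_aGen (d : ℕ) (i : Fin d) : Rc (aGen d i) = 0 := rfl

theorem Lc_aGen (d : ℕ) (i : Fin d) : Lc (aGen d i) = Pi.single i 1 := rfl

theorem tGen_zpow (d : ℕ) (c : ℤ) :
    tGen d ^ c = SemidirectProduct.inr (Multiplicative.ofAdd c) := by
  rw [tGen, ← map_zpow]
  congr 1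
  rw [← ofAdd_zsmul]
  congr 1
  simp

theorem aGen_zpow (d : ℕ) (i : Fin d) (c : ℤ) :
    aGen d i ^ c = SemidirectProduct.inl (Multiplicative.ofAdd (Pi.single i c)) := by
  rw [aGen, ← map_zpow]
  congr 1
  rw [← ofAdd_zsmul]
  congr 1
  ext j
  by_cases hji : j = i
  · subst hji; simp
  · simp [Pi.single_apply, hji]

theorem prod_aGen (d : ℕ) (m : Fin d → ℤ) :
    (List.ofFn (fun i : Fin d => aGen d i ^ m i)).prod =
      SemidirectProduct.inl (Multiplicative.ofAdd m) := by
  simp only [aGen_zpow]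
  have h1 : (List.ofFn fun i : Fin d =>
      (SemidirectProduct.inl (Multiplicative.ofAdd (Pi.single i (m i))) : Gamma d)) =
      List.map (SemidirectProduct.inl)
        (List.ofFn fun i : Fin d => Multiplicative.ofAdd (Pi.single i (m i))) := by
    rw [List.map_ofFn]
    rfl
  rw [h1, ← map_list_prod]
  congr 1
  rw [List.prod_ofFn]
  rw [show (∏ i : Fin d, Multiplicative.ofAdd (Pi.single i (m i))) =
    Multiplicative.ofAdd (∑ i : Fin d, Pi.single i (m i)) from (ofAdd_sum _ _).symm]
  congr 1
  exact Finset.univ_sum_single m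

theorem Rc_inl {d : ℕ} (a : Multiplicative (Fin d → ℤ)) :
    Rc (SemidirectProduct.inl a : Gamma d) = 0 := rfl

theorem Lc_inl {d : ℕ} (a : Multiplicative (Fin d → ℤ)) :
    Lc (SemidirectProduct.inl a : Gamma d) = Multiplicative.toAdd a := rfl

theorem Rc_inr {d : ℕ} (b : Multiplicative ℤ) :
    Rc (SemidirectProduct.inr b : Gamma d) = Multiplicative.toAdd b := rfl

theorem Lc_inr {d : ℕ} (b : Multiplicative ℤ) :
    Lc (SemidirectProduct.inr b : Gamma d) = 0 := rfl

theorem nf_Rc {d : ℕ} (m₀ : ℤ) (m : Fin d → ℤ) :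
    Rc (tGen d ^ m₀ * (List.ofFn (fun i : Fin d => aGen d i ^ m i)).prod) = m₀ := by
  rw [Rc_mul, tGen_zpow, prod_aGen, Rc_inr, Rc_inl, add_zero]
  rfl

theorem nf_Lc {d : ℕ} (m₀ : ℤ) (m : Fin d → ℤ) :
    Lc (tGen d ^ m₀ * (List.ofFn (fun i : Fin d => aGen d i ^ m i)).prod) = psi d m₀ m := by
  rw [Lc_mul, tGen_zpow, prod_aGen, Lc_inr, Lc_inl]
  rw [show Rc (SemidirectProduct.inr (Multiplicative.ofAdd m₀) : Gamma d) = m₀ from rfl]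
  simp

theorem Rc_pow {d : ℕ} (h : Gamma d) (p : ℕ) : Rc (h ^ p) = (p : ℤ) * Rc h := by
  induction p with
  | zero => simp [Rc_one]
  | succ p ih => rw [pow_succ, Rc_mul, ih]; push_cast; ring

theorem Lc_pow {d : ℕ} (h : Gamma d) (p : ℕ) :
    Lc (h ^ p) = ∑ k ∈ Finset.range p, psi d ((k : ℤ) * Rc h) (Lc h) := by
  induction p with
  | zero => simp [Lc_one]
  | succ p ih =>
      rw [pow_succ, Lc_mul, ih, Rc_pow, Finset.sum_range_succ]

theorem closure_gens (d : ℕ) : Subgroup.closure (gens d) = ⊤ := by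
  rw [eq_top_iff]
  intro g _
  rw [← SemidirectProduct.inl_left_mul_inr_right g]
  apply mul_mem
  · have hg : (SemidirectProduct.inl g.left : Gamma d) =
        (List.ofFn (fun i : Fin d => aGen d i ^ (Multiplicative.toAdd g.left) i)).prod := by
      rw [prod_aGen]
      simp
    rw [hg]
    apply list_prod_mem
    intro x hx
    rw [List.mem_ofFn] at hx
    obtain ⟨i, rfl⟩ := hx
    exact zpow_mem (Subgroup.subset_closure (Set.mem_insert_iff.mpr (Or.inr (Set.mem_range_self i)))) _
  · have hg : (SemidirectProduct.inr g.right : Gamma d) =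
        tGen d ^ (Multiplicative.toAdd g.right) := by
      rw [tGen_zpow]
      simp
    rw [hg]
    exact zpow_mem (Subgroup.subset_closure (Set.mem_insert _ _)) _

theorem exists_word (d : ℕ) (γ : Gamma d) :
    ∃ l : List (Gamma d), (∀ x ∈ l, x ∈ gens d ∨ x⁻¹ ∈ gens d) ∧ l.prod = γ := by
  have hγ : γ ∈ Subgroup.closure (gens d) := by rw [closure_gens]; trivial
  have hγ' : γ ∈ (Subgroup.closure (gens d)).toSubmonoid := hγ
  rw [Subgroup.closure_toSubmonoid] at hγ'
  obtain ⟨l, hl, hprod⟩ := Submonoid.exists_list_of_mem_closure hγ'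
  refine ⟨l, fun x hx => ?_, hprod⟩
  rcases hl x hx with h | h
  · exact Or.inl h
  · exact Or.inr (Set.mem_inv.mp h)

theorem exists_min_word (d : ℕ) (γ : Gamma d) :
    ∃ l : List (Gamma d), l.length = wl d γ ∧
      (∀ x ∈ l, x ∈ gens d ∨ x⁻¹ ∈ gens d) ∧ l.prod = γ := by
  have hne : {n | ∃ l : List (Gamma d), l.length = n ∧
      (∀ x ∈ l, x ∈ gens d ∨ x⁻¹ ∈ gens d) ∧ l.prod = γ}.Nonempty := by
    obtain ⟨l, hl, hprod⟩ := exists_word d γ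
    exact ⟨l.length, l, rfl, hl, hprod⟩
  obtain ⟨l, hlen, hmem, hprod⟩ := Nat.sInf_mem hne
  exact ⟨l, hlen, hmem, hprod⟩

theorem single_bound {d : ℕ} (i j : Fin d) (c : ℤ) (hc : c.natAbs ≤ 1) :
    ((Pi.single i c : Fin d → ℤ) j).natAbs ≤ 1 := by
  by_cases hji : j = i
  · subst hji; simpa using hc
  · simp [Pi.single_apply, hji]

theorem letter_bound {d : ℕ} {w : Gamma d} (hw : w ∈ gens d ∨ w⁻¹ ∈ gens d) :
    (Rc w).natAbs ≤ 1 ∧ ∀ j : Fin d, (Lc w j).natAbs ≤ 1 := by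
  rcases hw with h | h
  · rw [gens, Set.mem_insert_iff] at h
    rcases h with rfl | ⟨i, rfl⟩
    · exact ⟨by rw [Rc_tGen]; decide, fun j => by rw [Lc_tGen]; simp⟩
    · refine ⟨by rw [Rc_aGen]; simp, fun j => ?_⟩
      rw [Lc_aGen]
      exact single_bound i j 1 (by simp)
  · rw [gens, Set.mem_insert_iff] at h
    rcases h with h | ⟨i, hi⟩
    · have hw2 : w = tGen d ^ (-1 : ℤ) := by rw [zpow_neg_one, ← h, inv_inv]
      rw [hw2, tGen_zpow]
      exact ⟨by rw [Rc_inr]; simp, fun j => by rw [Lc_inr]; simp⟩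
    · have hw2 : w = aGen d i ^ (-1 : ℤ) := by rw [zpow_neg_one, hi, inv_inv]
      rw [hw2, aGen_zpow]
      refine ⟨by rw [Rc_inl]; simp, fun j => ?_⟩
      rw [Lc_inl, toAdd_ofAdd]
      exact single_bound i j (-1) (by simp)

theorem word_bound {d : ℕ} : ∀ l : List (Gamma d),
    (∀ x ∈ l, x ∈ gens d ∨ x⁻¹ ∈ gens d) →
    (Rc l.prod).natAbs ≤ l.length ∧
      ∀ j : Fin d, (Lc l.prod j).natAbs ≤ l.length * (l.length + 1) ^ (j : ℕ) := by
  intro l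
  induction l with
  | nil =>
      intro _
      constructor
      · simp [Rc_one]
      · intro j; simp [Lc_one]
  | cons w rest ih =>
      intro hmem
      have hw := letter_bound (hmem w List.mem_cons_self)
      have ihr := ih (fun x hx => hmem x (List.mem_cons_of_mem w hx))
      set L := rest.length with hL
      constructor
      · rw [List.prod_cons, Rc_mul]
        calc (Rc w + Rc rest.prod).natAbs ≤ (Rc w).natAbs + (Rc rest.prod).natAbs :=
              Int.natAbs_add_le _ _
          _ ≤ 1 + L := by have := hw.1; have := ihr.1; omega
          _ = (w :: rest).length := by simp [hL, add_comm]
      · intro j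
        rw [List.prod_cons, Lc_mul]
        have hpsi : ((psi d (Rc w) (Lc rest.prod)) j).natAbs ≤ L * (L + 1 + 1) ^ (j : ℕ) :=
          psi_bound' d (n := L + 1) (by omega) ihr.2 hw.1 j
        have hlw : (Lc w j).natAbs ≤ 1 := hw.2 j
        have hone : (1 : ℕ) ≤ (L + 1 + 1) ^ (j : ℕ) := Nat.one_le_pow _ _ (by omega)
        calc (Lc w j + psi d (Rc w) (Lc rest.prod) j).natAbs
            ≤ (Lc w j).natAbs + ((psi d (Rc w) (Lc rest.prod)) j).natAbs := by
              have := Int.natAbs_add_le (Lc w j) (psi d (Rc w) (Lc rest.prod) j)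
              simpa using this
          _ ≤ 1 + L * (L + 1 + 1) ^ (j : ℕ) := by omega
          _ ≤ (L + 1) * (L + 1 + 1) ^ (j : ℕ) := by nlinarith
          _ = (w :: rest).length * ((w :: rest).length + 1) ^ (j : ℕ) := by
              simp [hL]

theorem natAbs_sum_le {ι : Type*} (s : Finset ι) (f : ι → ℤ) :
    (∑ i ∈ s, f i).natAbs ≤ ∑ i ∈ s, (f i).natAbs := by
  classical
  induction s using Finset.induction with
  | empty => simp
  | @insert a s h ih =>
      rw [Finset.sum_insert h, Finset.sum_insert h]
      exact (Int.natAbs_add_le _ _).trans (by omega)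

/-- Proposition 5.1: there is `k_d > 0` such that whenever `h^p = γ` in `Γ_d` with
`d(1,γ) ≤ n`, the normal form `h = t^{m_0} a_1^{m_1} ⋯ a_d^{m_d}` satisfies `|m_0| ≤ n/p`
and `|m_i| ≤ k_d n^i / p` (0-indexed: `p |m_i| ≤ k_d n^{i+1}`). -/
theorem roots_have_short_normal_forms (d : ℕ) (hd : 1 ≤ d) :
    ∃ K : ℕ, 0 < K ∧ ∀ p n : ℕ, 0 < p → 0 < n → ∀ γ h : Gamma d,
      wl d γ ≤ n → h ^ p = γ → ∀ m₀ : ℤ, ∀ m : Fin d → ℤ,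
      h = tGen d ^ m₀ * (List.ofFn (fun i : Fin d => aGen d i ^ m i)).prod →
      p * m₀.natAbs ≤ n ∧ ∀ i : Fin d, p * (m i).natAbs ≤ K * n ^ ((i : ℕ) + 1) := by
  refine ⟨2 ^ d * (2 ^ d + 1) ^ d, by positivity, ?_⟩
  intro p n hp hn γ h hwl hpow m₀ m hnf
  have hRh : Rc h = m₀ := by rw [hnf]; exact nf_Rc m₀ m
  have hLh : Lc h = psi d m₀ m := by rw [hnf]; exact nf_Lc m₀ m
  obtain ⟨l, hlen, hmem, hprod⟩ := exists_min_word d γ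
  have hlen' : l.length ≤ n := by omega
  have hwb := word_bound l hmem
  have hRγ : (Rc γ).natAbs ≤ n := by rw [← hprod]; exact (hwb.1).trans hlen'
  have hLγ : ∀ j : Fin d, (Lc γ j).natAbs ≤ 2 ^ d * n ^ ((j : ℕ) + 1) := by
    intro j
    have h1 := hwb.2 j
    rw [hprod] at h1
    calc (Lc γ j).natAbs ≤ l.length * (l.length + 1) ^ (j : ℕ) := h1
      _ ≤ n * (2 * n) ^ (j : ℕ) :=
          Nat.mul_le_mul hlen' (Nat.pow_le_pow_left (by omega) _)
      _ = 2 ^ (j : ℕ) * n ^ ((j : ℕ) + 1) := by rw [Nat.mul_pow]; ring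
      _ ≤ 2 ^ d * n ^ ((j : ℕ) + 1) :=
          Nat.mul_le_mul_right _ (Nat.pow_le_pow_right (by omega) (le_of_lt j.isLt))
  have hRγ2 : Rc γ = (p : ℤ) * m₀ := by rw [← hpow, Rc_pow, hRh]
  have goal1 : p * m₀.natAbs ≤ n := by
    have he : ((p : ℤ) * m₀).natAbs = p * m₀.natAbs := by
      rw [Int.natAbs_mul, Int.natAbs_natCast]
    rw [← he, ← hRγ2]
    exact hRγ
  refine ⟨goal1, ?_⟩
  have hsum : Lc γ = ∑ k ∈ Finset.range p, psi d ((k : ℤ) * m₀ + m₀) m := by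
    rw [← hpow, Lc_pow, hRh, hLh]
    exact Finset.sum_congr rfl fun k _ => (psi_add d _ _ m).symm
  have key : ∀ jj : ℕ, ∀ j : Fin d, (j : ℕ) = jj →
      p * (m j).natAbs ≤ 2 ^ d * (2 ^ d + 1) ^ jj * n ^ (jj + 1) := by
    intro jj
    induction jj using Nat.strong_induction_on with
    | _ jj ih =>
      intro j hj
      have hjd : jj < d := hj ▸ j.isLt
      set x' : Fin d → ℤ := fun i => if (i : ℕ) < jj then m i else 0 with hx'
      set x'' : Fin d → ℤ := fun i => if (i : ℕ) < jj then 0 else m i with hx''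
      have hxsum : m = x' + x'' := by
        funext i; by_cases hi : (i : ℕ) < jj <;> simp [hx', hx'', hi]
      have htri : ∀ s : ℤ, psi d s m j = psi d s x' j + m j := by
        intro s
        have hzero : ∀ i : Fin d, (i : ℕ) < jj → x'' i = 0 := fun i hi => by
          simp [hx'', hi]
        have ht := psi_tri d s jj hzero
        have hsplit : psi d s m = psi d s x' + psi d s x'' := by
          rw [hxsum, map_add]
        rw [hsplit]
        simp only [Pi.add_apply]
        congr 1
        rw [ht.2 j hj]
        simp [hx'', hj]
      have hid : Lc γ j =
          (∑ k ∈ Finset.range p, psi d ((k : ℤ) * m₀ + m₀) x' j) + (p : ℤ) * m j := by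
        have : Lc γ j = ∑ k ∈ Finset.range p, psi d ((k : ℤ) * m₀ + m₀) m j := by
          rw [hsum, Finset.sum_apply]
        rw [this]
        calc ∑ k ∈ Finset.range p, psi d ((k : ℤ) * m₀ + m₀) m j
            = ∑ k ∈ Finset.range p, (psi d ((k : ℤ) * m₀ + m₀) x' j + m j) :=
              Finset.sum_congr rfl fun k _ => htri _
          _ = (∑ k ∈ Finset.range p, psi d ((k : ℤ) * m₀ + m₀) x' j) + (p : ℤ) * m j := by
              rw [Finset.sum_add_distrib, Finset.sum_const, Finset.card_range, nsmul_eq_mul]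
      rcases Nat.eq_zero_or_pos jj with hjz | hjpos
      · -- jj = 0 : x' = 0 and Lc γ j = p * m j
        subst hjz
        have hx0 : x' = 0 := by
          funext i; simp [hx']
        have hcoord : Lc γ j = (p : ℤ) * m j := by
          rw [hid, hx0]
          simp
        have : ((p : ℤ) * m j).natAbs = p * (m j).natAbs := by
          rw [Int.natAbs_mul, Int.natAbs_natCast]
        rw [← this, ← hcoord]
        have hLγ' := hLγ j
        rw [hj] at hLγ'
        simpa using hLγ'
      · obtain ⟨ll, rfl⟩ : ∃ ll, jj = ll + 1 := ⟨jj - 1, by omega⟩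
        set c₀ : ℕ := 2 ^ d * (2 ^ d + 1) ^ ll * n with hc₀
        have hpx' : ∀ i : Fin d, (((p : ℤ) • x') i).natAbs ≤ c₀ * n ^ (i : ℕ) := by
          intro i
          by_cases hi : (i : ℕ) < ll + 1
          · have hihyp := ih (i : ℕ) hi i rfl
            have : (((p : ℤ) • x') i).natAbs = p * (m i).natAbs := by
              simp only [Pi.smul_apply, smul_eq_mul, hx']
              rw [if_pos hi, Int.natAbs_mul, Int.natAbs_natCast]
            rw [this]
            calc p * (m i).natAbs ≤ 2 ^ d * (2 ^ d + 1) ^ (i : ℕ) * n ^ ((i : ℕ) + 1) := hihyp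
              _ ≤ 2 ^ d * (2 ^ d + 1) ^ ll * n ^ ((i : ℕ) + 1) := by
                  have : (2 ^ d + 1) ^ (i : ℕ) ≤ (2 ^ d + 1) ^ ll :=
                    Nat.pow_le_pow_right (by positivity) (by omega)
                  exact Nat.mul_le_mul_right _ (Nat.mul_le_mul_left _ this)
              _ = c₀ * n ^ (i : ℕ) := by rw [hc₀, pow_succ]; ring
          · have : x' i = 0 := by simp [hx', hi]; omega
            simp [this]
        have hterm : ∀ k, k ∈ Finset.range p →
            ((p : ℤ) * psi d ((k : ℤ) * m₀ + m₀) x' j).natAbs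
              ≤ c₀ * 2 ^ (ll + 1) * n ^ (ll + 1) := by
          intro k hk
          rw [Finset.mem_range] at hk
          have hs : ((k : ℤ) * m₀ + m₀).natAbs ≤ n := by
            have h1 : (k : ℤ) * m₀ + m₀ = ((k : ℤ) + 1) * m₀ := by ring
            rw [h1, Int.natAbs_mul]
            have h2 : ((k : ℤ) + 1).natAbs = k + 1 := by omega
            rw [h2]
            calc (k + 1) * m₀.natAbs ≤ p * m₀.natAbs := Nat.mul_le_mul_right _ (by omega)
              _ ≤ n := goal1
          have hmaps : (p : ℤ) * psi d ((k : ℤ) * m₀ + m₀) x' j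
              = psi d ((k : ℤ) * m₀ + m₀) ((p : ℤ) • x') j := by
            rw [map_smul]
            simp
          rw [hmaps]
          have := psi_bound' d (n := n) (kk := n) (by omega) hpx' hs j
          calc (psi d ((k : ℤ) * m₀ + m₀) ((p : ℤ) • x') j).natAbs
              ≤ c₀ * (n + n) ^ (j : ℕ) := this
            _ = c₀ * 2 ^ (ll + 1) * n ^ (ll + 1) := by
                rw [hj, show n + n = 2 * n by ring, Nat.mul_pow]
                ring
        have hid2 : (p : ℤ) * ((p : ℤ) * m j) =
            (p : ℤ) * Lc γ j - ∑ k ∈ Finset.range p, (p : ℤ) * psi d ((k : ℤ) * m₀ + m₀) x' j := by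
          rw [← Finset.mul_sum, hid]
          ring
        have hbig : p * (p * (m j).natAbs) ≤
            p * (2 ^ d * n ^ (ll + 1 + 1)) + p * (c₀ * 2 ^ (ll + 1) * n ^ (ll + 1)) := by
          have hL : ((p : ℤ) * ((p : ℤ) * m j)).natAbs = p * (p * (m j).natAbs) := by
            rw [Int.natAbs_mul, Int.natAbs_mul, Int.natAbs_natCast]
          rw [← hL, hid2]
          calc ((p : ℤ) * Lc γ j - ∑ k ∈ Finset.range p, (p : ℤ) *
                psi d ((k : ℤ) * m₀ + m₀) x' j).natAbs
              ≤ ((p : ℤ) * Lc γ j).natAbs + (∑ k ∈ Finset.range p, (p : ℤ) *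
                psi d ((k : ℤ) * m₀ + m₀) x' j).natAbs := Int.natAbs_sub_le _ _
            _ ≤ p * (2 ^ d * n ^ (ll + 1 + 1)) + p * (c₀ * 2 ^ (ll + 1) * n ^ (ll + 1)) := by
                have hA : ((p : ℤ) * Lc γ j).natAbs ≤ p * (2 ^ d * n ^ (ll + 1 + 1)) := by
                  rw [Int.natAbs_mul, Int.natAbs_natCast]
                  have := hLγ j
                  rw [hj] at this
                  exact Nat.mul_le_mul_left p this
                have hB : (∑ k ∈ Finset.range p, (p : ℤ) *
                    psi d ((k : ℤ) * m₀ + m₀) x' j).natAbs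
                    ≤ p * (c₀ * 2 ^ (ll + 1) * n ^ (ll + 1)) := by
                  calc (∑ k ∈ Finset.range p, (p : ℤ) *
                      psi d ((k : ℤ) * m₀ + m₀) x' j).natAbs
                      ≤ ∑ k ∈ Finset.range p, ((p : ℤ) *
                        psi d ((k : ℤ) * m₀ + m₀) x' j).natAbs := natAbs_sum_le _ _
                    _ ≤ ∑ _k ∈ Finset.range p, c₀ * 2 ^ (ll + 1) * n ^ (ll + 1) :=
                        Finset.sum_le_sum hterm
                    _ = p * (c₀ * 2 ^ (ll + 1) * n ^ (ll + 1)) := by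
                        rw [Finset.sum_const, Finset.card_range, smul_eq_mul]
                omega
        have hcancel : p * (m j).natAbs ≤
            2 ^ d * n ^ (ll + 1 + 1) + c₀ * 2 ^ (ll + 1) * n ^ (ll + 1) := by
          have hdist : p * (2 ^ d * n ^ (ll + 1 + 1) + c₀ * 2 ^ (ll + 1) * n ^ (ll + 1)) =
              p * (2 ^ d * n ^ (ll + 1 + 1)) + p * (c₀ * 2 ^ (ll + 1) * n ^ (ll + 1)) :=
            Nat.mul_add _ _ _
          exact Nat.le_of_mul_le_mul_left (by omega) hp
        refine hcancel.trans ?_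
        have hfin : 1 + 2 ^ (ll + 1) * (2 ^ d + 1) ^ ll ≤ (2 ^ d + 1) ^ (ll + 1) := by
          have h2 : 2 ^ (ll + 1) ≤ 2 ^ d := Nat.pow_le_pow_right (by omega) (by omega)
          have h3 : 1 ≤ (2 ^ d + 1) ^ ll := Nat.one_le_pow _ _ (by positivity)
          calc 1 + 2 ^ (ll + 1) * (2 ^ d + 1) ^ ll
              ≤ (2 ^ d + 1) ^ ll + 2 ^ d * (2 ^ d + 1) ^ ll :=
                Nat.add_le_add h3 (Nat.mul_le_mul_right _ h2)
            _ = (2 ^ d + 1) ^ (ll + 1) := by ring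
        calc 2 ^ d * n ^ (ll + 1 + 1) + c₀ * 2 ^ (ll + 1) * n ^ (ll + 1)
            = 2 ^ d * n ^ (ll + 1 + 1) * (1 + 2 ^ (ll + 1) * (2 ^ d + 1) ^ ll) := by
              rw [hc₀, pow_succ]
              ring
          _ ≤ 2 ^ d * n ^ (ll + 1 + 1) * (2 ^ d + 1) ^ (ll + 1) :=
              Nat.mul_le_mul_left _ hfin
          _ = 2 ^ d * (2 ^ d + 1) ^ (ll + 1) * n ^ (ll + 1 + 1) := by ring
  intro i
  have hkey := key (i : ℕ) i rfl
  calc p * (m i).natAbs ≤ 2 ^ d * (2 ^ d + 1) ^ (i : ℕ) * n ^ ((i : ℕ) + 1) := hkey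
    _ ≤ 2 ^ d * (2 ^ d + 1) ^ d * n ^ ((i : ℕ) + 1) := by
        have : (2 ^ d + 1) ^ (i : ℕ) ≤ (2 ^ d + 1) ^ d :=
          Nat.pow_le_pow_right (by positivity) (le_of_lt i.isLt)
        exact Nat.mul_le_mul_right _ (Nat.mul_le_mul_left _ this)

end ModelFiliform
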